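/- Fix a type Σ, a natural number n, and a list u over Σ, and let R be the relation on lists over Σ defined by: R s s' iff there exist lists v, t with s = v ++ t, v of length n, and s' = u ++ t. If s_1, …, s_k (k ≥ 1) are lists with R s_i s_{i+1} for all 1 ≤ i < k and R s_k s_1, then s_1 = s_2 = … = s_k. In other words, every R-cycle consists of a single repeated list. -/

import Mathlib

/-- The relation `R(n,u)` on lists over `α`: `R s s'` iff there are lists
`v, t` with `s = v ++ t`, `v` of length `n`, and `s' = u ++ t`. -/
def Rrel {α : Type} (n : ℕ) (u : List α) (s s' : List α) : Prop :=
  ∃ v t : List α, s = v ++ t ∧ v.length = n ∧ s' = u ++ t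

/-!
Each step of `R(n,u)` changes the length by `|u| - n`, so a cycle forces `|u| = n`.
Then `R s s'` means `s' = u ++ drop n s`, and this map is idempotent, so a step out of a
list that already has an `R`-predecessor stays put; in a cycle every member has one.
-/

theorem Relation.cycle_eq_of_stationary {β : Type*} {r : β → β → Prop}
    (hr : ∀ a b c, r a b → r b c → c = b) {k : ℕ} {s : ℕ → β}
    (hchain : ∀ i, i + 1 < k → r (s i) (s (i + 1))) (hcycle : r (s (k - 1)) (s 0)) :
    ∀ i < k, s i = s 0 := by
  have hpred : ∀ i < k, ∃ p, r p (s i) := by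
    rintro (_ | i) hi
    · exact ⟨_, hcycle⟩
    · exact ⟨_, hchain i hi⟩
  intro i hi
  induction i with
  | zero => rfl
  | succ i ih =>
    obtain ⟨p, hp⟩ := hpred i (by omega)
    rw [hr _ _ _ hp (hchain i hi), ih (by omega)]

namespace Rrel

variable {α : Type} {n : ℕ} {u s s' s'' : List α}

theorem eq_append_drop (h : Rrel n u s s') : s' = u ++ s.drop n := by
  obtain ⟨v, t, rfl, rfl, rfl⟩ := h
  rw [List.drop_left]

theorem length_add (h : Rrel n u s s') : s'.length + n = s.length + u.length := by
  obtain ⟨v, t, rfl, rfl, rfl⟩ := h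
  simp only [List.length_append]
  omega

theorem eq_of_length_eq (hu : u.length = n) (h : Rrel n u s s') (h' : Rrel n u s' s'') :
    s'' = s' := by
  obtain ⟨_, t, -, -, rfl⟩ := h
  rw [h'.eq_append_drop, ← hu, List.drop_left]

theorem length_eq_of_cycle {k : ℕ} {s : ℕ → List α}
    (hchain : ∀ i, i + 1 < k → Rrel n u (s i) (s (i + 1)))
    (hcycle : Rrel n u (s (k - 1)) (s 0)) (hk : k ≠ 0) : u.length = n := by
  have hlin : ∀ i < k, (s i).length + i * n = (s 0).length + i * u.length := by
    intro i hi
    induction i with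
    | zero => simp
    | succ i ih =>
      have := (hchain i hi).length_add
      have := ih (by omega)
      simp only [Nat.succ_mul]
      omega
  obtain ⟨m, rfl⟩ := Nat.exists_eq_succ_of_ne_zero hk
  have hm := hlin m (Nat.lt_succ_self m)
  have hlast := hcycle.length_add
  simp only [Nat.succ_sub_one] at hlast
  have : (m + 1) * u.length = (m + 1) * n := by
    simp only [Nat.succ_mul]
    omega
  exact Nat.eq_of_mul_eq_mul_left m.succ_pos this

end Rrel

theorem Rrel_cycle_constant_general {α : Type} (n : ℕ) (u : List α)
    (k : ℕ) (s : ℕ → List α)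
    (hchain : ∀ i, i + 1 < k → Rrel n u (s i) (s (i + 1)))
    (hcycle : Rrel n u (s (k - 1)) (s 0)) :
    ∀ i < k, ∀ j < k, s i = s j := by
  intro i hi j hj
  have hu : u.length = n := Rrel.length_eq_of_cycle hchain hcycle (by omega)
  have hconst := Relation.cycle_eq_of_stationary
    (fun _ _ _ h h' => Rrel.eq_of_length_eq hu h h') hchain hcycle
  rw [hconst i hi, hconst j hj]

/-- Every `R`-cycle `s 0, s 1, …, s (k-1), s 0` (with `k ≥ 1`) consists of a
single repeated list: all its members are equal. -/
theorem Rrel_cycle_constant {α : Type} (n : ℕ) (u : List α)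
    (k : ℕ) (hk : 1 ≤ k) (s : ℕ → List α)
    (hchain : ∀ i, i + 1 < k → Rrel n u (s i) (s (i + 1)))
    (hcycle : Rrel n u (s (k - 1)) (s 0)) :
    ∀ i < k, ∀ j < k, s i = s j :=
  Rrel_cycle_constant_general n u k s hchain hcycle
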